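/- arXiv:2504.10882 — 3 statements merged into one kernel-verified Lean document; each statement's English description precedes it below -/
import Mathlib

section
/- Let 0 < c < 1, 0 < η < 1, 0 < η_d < 1. Then c·(1 − η_d)/(1 − cη) − (1/η)·ln((1 − cη·η_d)/(1 − cη)) ≥ c²·η·(1 − η_d)² / (2·(1 − cη)·(1 − cη·η_d)) > 0. -/
lemma key_ineq (x : ℝ) (hx : 0 ≤ x) :
    x ^ 2 / (2 * (1 + x)) ≤ x - Real.log (1 + x) := by
  have h1 : (0:ℝ) < 1 + x := by linarith
  have ht2 : x - x ^ 2 / (2 * (1 + x)) = x * (x + 2) / (2 * (1 + x)) := by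
    field_simp; ring
  have htnn : 0 ≤ x * (x + 2) / (2 * (1 + x)) := by positivity
  have hlog : Real.log (1 + x) ≤ x * (x + 2) / (2 * (1 + x)) := by
    rw [Real.log_le_iff_le_exp h1]
    have hq := Real.quadratic_le_exp_of_nonneg htnn
    have hdiff : 1 + x * (x + 2) / (2 * (1 + x)) + (x * (x + 2) / (2 * (1 + x))) ^ 2 / 2
        - (1 + x) = x ^ 4 / (2 * (2 * (1 + x)) ^ 2) := by
      field_simp; ring
    nlinarith [pow_nonneg hx 4, sq_nonneg (2 * (1 + x)), div_nonneg (pow_nonneg hx 4) (le_of_lt (by positivity : (0:ℝ) < 2 * (2 * (1 + x)) ^ 2))]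
  linarith [ht2 ▸ hlog]

/-- The sum of the first two terms of the KL ratio is strictly positive:
c(1−η_d)/(1−cη) − (1/η)ln((1−cηη_d)/(1−cη)) ≥ c²η(1−η_d)²/(2(1−cη)(1−cηη_d)) > 0. -/
theorem first_two_terms_pos (c η ηd : ℝ) (hc : 0 < c) (hc1 : c < 1)
    (hη : 0 < η) (hη1 : η < 1) (hηd : 0 < ηd) (hηd1 : ηd < 1) :
    c * (1 - ηd) / (1 - c * η)
        - (1 / η) * Real.log ((1 - c * η * ηd) / (1 - c * η))
      ≥ c ^ 2 * η * (1 - ηd) ^ 2 / (2 * (1 - c * η) * (1 - c * η * ηd)) ∧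
    0 < c ^ 2 * η * (1 - ηd) ^ 2 / (2 * (1 - c * η) * (1 - c * η * ηd)) := by
  have ha : 0 < 1 - c * η := by nlinarith
  have hb : 0 < 1 - c * η * ηd := by nlinarith
  set x : ℝ := c * η * (1 - ηd) / (1 - c * η) with hxdef
  have hx : 0 ≤ x := div_nonneg (mul_nonneg (mul_nonneg hc.le hη.le) (by linarith)) ha.le
  have h1x : (0:ℝ) < 1 + x := by linarith
  have harg : (1 - c * η * ηd) / (1 - c * η) = 1 + x := by
    rw [hxdef]; field_simp; ring
  have key := key_ineq x hx
  constructor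
  · rw [harg]
    have e1 : c * (1 - ηd) / (1 - c * η) = x / η := by
      rw [hxdef]; field_simp
    have e2 : c ^ 2 * η * (1 - ηd) ^ 2 / (2 * (1 - c * η) * (1 - c * η * ηd))
        = x ^ 2 / (2 * (1 + x)) / η := by
      rw [hxdef]
      have h2 : (1:ℝ) + c * η * (1 - ηd) / (1 - c * η)
          = (1 - c * η * ηd) / (1 - c * η) := by field_simp; ring
      rw [h2]
      field_simp
    rw [e1, e2, ge_iff_le, div_le_iff₀ hη]
    have : (1 / η) * Real.log (1 + x) * η = Real.log (1 + x) := by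
      field_simp
    rw [sub_mul, div_mul_cancel₀ _ (ne_of_gt hη), this]
    linarith
  · have h3 : (0:ℝ) < 1 - ηd := by linarith
    exact div_pos (by positivity) (by positivity)
end

section
/- Define c_n = 2√(n·N_a)/(√(n·N_a + 1) + √(n·N_a)) for real N_a > 0 and integer n ≥ 1, and let q_n = (1/(4(N+N_a)n))·( c_n/(1−c_n η)·(1−η_d)/(1−√η_d)² − (1/η)·ln((1−c_n η η_d)/(1−c_n η))/(1−√η_d)² + 4Nn/(1−c_n η) ) with 0 < η < 1, 0 < η_d < 1, N > 0. If N_a satisfies, for some ε > 0 with c_{n,ε} = 2√(nε)/(√(nε+1)+√(nε)), the bounds ε ≤ N_a ≤ c_{n,ε}·N·η/(1 − c_{n,ε}·η), then q_n > 1. -/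
lemma c_aux_pos (a : ℝ) (ha : 0 < a) :
    0 < 2 * Real.sqrt a / (Real.sqrt (a + 1) + Real.sqrt a) := by
  have h0 : 0 < Real.sqrt a := Real.sqrt_pos.mpr ha
  have h1 : 0 < Real.sqrt (a + 1) := Real.sqrt_pos.mpr (by linarith)
  exact div_pos (by linarith) (by linarith)

lemma c_aux_lt_one (a : ℝ) (ha : 0 < a) :
    2 * Real.sqrt a / (Real.sqrt (a + 1) + Real.sqrt a) < 1 := by
  have h0 : 0 < Real.sqrt a := Real.sqrt_pos.mpr ha
  have h1 : Real.sqrt a < Real.sqrt (a + 1) :=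
    Real.sqrt_lt_sqrt ha.le (by linarith)
  rw [div_lt_one (by linarith)]
  linarith

lemma c_aux_mono (a b : ℝ) (ha : 0 < a) (hab : a ≤ b) :
    2 * Real.sqrt a / (Real.sqrt (a + 1) + Real.sqrt a) ≤
      2 * Real.sqrt b / (Real.sqrt (b + 1) + Real.sqrt b) := by
  have hb : 0 < b := lt_of_lt_of_le ha hab
  have h0a : 0 < Real.sqrt a := Real.sqrt_pos.mpr ha
  have h0b : 0 < Real.sqrt b := Real.sqrt_pos.mpr hb
  have h1a : 0 < Real.sqrt (a + 1) := Real.sqrt_pos.mpr (by linarith)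
  have h1b : 0 < Real.sqrt (b + 1) := Real.sqrt_pos.mpr (by linarith)
  rw [div_le_div_iff₀ (by linarith) (by linarith)]
  have key : Real.sqrt a * Real.sqrt (b + 1) ≤ Real.sqrt b * Real.sqrt (a + 1) := by
    rw [← Real.sqrt_mul ha.le, ← Real.sqrt_mul hb.le]
    exact Real.sqrt_le_sqrt (by nlinarith)
  nlinarith [key]

set_option maxHeartbeats 1000000 in
/-- Quantum speedup regime: if ε ≤ N_a ≤ c_{n,ε}·N·η/(1 − c_{n,ε}·η) for some ε > 0,
then the quantum-to-classical KL divergence ratio q_n exceeds 1. -/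
theorem qn_gt_one (n : ℕ) (hn : 1 ≤ n) (N Na η ηd ε : ℝ)
    (hN : 0 < N) (hNa : 0 < Na) (hη : 0 < η) (hη1 : η < 1)
    (hηd : 0 < ηd) (hηd1 : ηd < 1) (hε : 0 < ε)
    (cn cnε qn : ℝ)
    (hcn : cn = 2 * Real.sqrt ((n : ℝ) * Na)
        / (Real.sqrt ((n : ℝ) * Na + 1) + Real.sqrt ((n : ℝ) * Na)))
    (hcnε : cnε = 2 * Real.sqrt ((n : ℝ) * ε)
        / (Real.sqrt ((n : ℝ) * ε + 1) + Real.sqrt ((n : ℝ) * ε)))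
    (hqn : qn = 1 / (4 * (N + Na) * (n : ℝ)) *
        (cn / (1 - cn * η) * ((1 - ηd) / (1 - Real.sqrt ηd) ^ 2)
          - (1 / η) * (Real.log ((1 - cn * η * ηd) / (1 - cn * η))
              / (1 - Real.sqrt ηd) ^ 2)
          + 4 * N * (n : ℝ) / (1 - cn * η)))
    (hlb : ε ≤ Na) (hub : Na ≤ cnε * N * η / (1 - cnε * η)) :
    1 < qn := by
  have hn' : (1:ℝ) ≤ (n:ℝ) := by exact_mod_cast hn
  have hna : 0 < (n:ℝ) * Na := by nlinarith
  have hnε : 0 < (n:ℝ) * ε := by nlinarith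
  have hcn_pos : 0 < cn := hcn ▸ c_aux_pos _ hna
  have hcn_lt1 : cn < 1 := hcn ▸ c_aux_lt_one _ hna
  have hcnε_pos : 0 < cnε := hcnε ▸ c_aux_pos _ hnε
  have hcnε_lt1 : cnε < 1 := hcnε ▸ c_aux_lt_one _ hnε
  have hmono : cnε ≤ cn := by
    rw [hcn, hcnε]
    exact c_aux_mono _ _ hnε (by nlinarith)
  have hx : cn * η < 1 := by nlinarith
  have hx0 : 0 < cn * η := mul_pos hcn_pos hη
  have h1x : 0 < 1 - cn * η := by linarith
  have hxε : 0 < 1 - cnε * η := by nlinarith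
  -- upper bound in multiplied form
  have hub' : Na * (1 - cnε * η) ≤ cnε * N * η := (le_div_iff₀ hxε).mp hub
  have hkey : (N + Na) * (1 - cn * η) ≤ N := by nlinarith
  -- sqrt ηd < 1
  have hsd : Real.sqrt ηd < 1 := by
    rw [show (1:ℝ) = Real.sqrt 1 by simp]
    exact Real.sqrt_lt_sqrt hηd.le hηd1
  have hD : 0 < (1 - Real.sqrt ηd) ^ 2 := pow_pos (by linarith) 2
  -- log bound
  have hu : 0 < cn * η * (1 - ηd) / (1 - cn * η) := by
    apply div_pos _ h1x; nlinarith
  have h1u : (1 - cn * η * ηd) / (1 - cn * η) = 1 + cn * η * (1 - ηd) / (1 - cn * η) := by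
    have hsplit : (1 - cn * η * ηd) = (1 - cn * η) + cn * η * (1 - ηd) := by ring
    rw [hsplit, add_div, div_self h1x.ne']
  have hlog : Real.log ((1 - cn * η * ηd) / (1 - cn * η)) < cn * η * (1 - ηd) / (1 - cn * η) := by
    rw [h1u]
    have hne : (1 : ℝ) + cn * η * (1 - ηd) / (1 - cn * η) ≠ 1 := ne_of_gt (by linarith)
    have := Real.log_lt_sub_one_of_pos (by linarith : (0:ℝ) < 1 + cn * η * (1 - ηd) / (1 - cn * η)) hne
    linarith
  -- positivity of A - B
  have hnum : 0 < cn / (1 - cn * η) * (1 - ηd) -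
      (1 / η) * Real.log ((1 - cn * η * ηd) / (1 - cn * η)) := by
    have h2 : (1 / η) * Real.log ((1 - cn * η * ηd) / (1 - cn * η)) <
        (1 / η) * (cn * η * (1 - ηd) / (1 - cn * η)) :=
      (mul_lt_mul_iff_right₀ (by positivity)).mpr hlog
    have h3 : (1 / η) * (cn * η * (1 - ηd) / (1 - cn * η)) =
        cn / (1 - cn * η) * (1 - ηd) := by
      field_simp
    linarith [h3 ▸ h2]
  have hAB : 0 < cn / (1 - cn * η) * ((1 - ηd) / (1 - Real.sqrt ηd) ^ 2)
      - (1 / η) * (Real.log ((1 - cn * η * ηd) / (1 - cn * η)) / (1 - Real.sqrt ηd) ^ 2) := by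
    have : cn / (1 - cn * η) * ((1 - ηd) / (1 - Real.sqrt ηd) ^ 2)
        - (1 / η) * (Real.log ((1 - cn * η * ηd) / (1 - cn * η)) / (1 - Real.sqrt ηd) ^ 2)
        = (cn / (1 - cn * η) * (1 - ηd) -
            (1 / η) * Real.log ((1 - cn * η * ηd) / (1 - cn * η))) / (1 - Real.sqrt ηd) ^ 2 := by
      ring
    rw [this]
    exact div_pos hnum hD
  -- the C term
  have hK : 0 < 1 / (4 * (N + Na) * (n:ℝ)) := by positivity
  have hKC : 1 ≤ 1 / (4 * (N + Na) * (n:ℝ)) * (4 * N * (n:ℝ) / (1 - cn * η)) := by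
    rw [div_mul_div_comm, one_mul, le_div_iff₀ (by positivity)]
    nlinarith
  have hqn' : qn = 1 / (4 * (N + Na) * (n:ℝ)) *
      (cn / (1 - cn * η) * ((1 - ηd) / (1 - Real.sqrt ηd) ^ 2)
        - (1 / η) * (Real.log ((1 - cn * η * ηd) / (1 - cn * η)) / (1 - Real.sqrt ηd) ^ 2))
      + 1 / (4 * (N + Na) * (n:ℝ)) * (4 * N * (n:ℝ) / (1 - cn * η)) := by
    rw [hqn]; ring
  nlinarith [mul_pos hK hAB]
end

section
/- Fix n ≥ 1 an integer, N, η, η_d with 0 < η < 1, 0 < η_d < 1, N > 0. Define c(N_a) = 2√(nN_a)/(√(nN_a+1)+√(nN_a)) and the quantum KL per pulse D(N_a) = (1/(2n))·( c(N_a)η/(1−c(N_a)η)·(1−η_d) − ln((1−c(N_a)η η_d)/(1−c(N_a)η)) + 4Nnη(1−√η_d)²/(1−c(N_a)η) ). Then ∂D/∂N_a → ∞ as N_a → 0⁺; more precisely, ∂D/∂N_a · √N_a → 2N√n·η²·(1−√η_d)² as N_a → 0⁺. -/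
open Filter

lemma key_c_eq (t : ℝ) (ht : 0 < t) :
    2 * Real.sqrt t / (Real.sqrt (t+1) + Real.sqrt t)
      = 2 * Real.sqrt (t*(t+1)) - 2*t := by
  have ht1 : (0:ℝ) < t + 1 := by linarith
  have ha : Real.sqrt t ^ 2 = t := Real.sq_sqrt ht.le
  have hb : Real.sqrt (t+1) ^ 2 = t + 1 := Real.sq_sqrt ht1.le
  have hm : Real.sqrt (t*(t+1)) = Real.sqrt t * Real.sqrt (t+1) := Real.sqrt_mul ht.le _
  have ha0 : 0 < Real.sqrt t := Real.sqrt_pos.2 ht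
  have hb0 : 0 < Real.sqrt (t+1) := Real.sqrt_pos.2 ht1
  rw [hm]
  have hden : Real.sqrt (t+1) + Real.sqrt t ≠ 0 := by positivity
  field_simp
  nlinarith [ha, hb, ha0.le, hb0.le]

lemma g_lb (t : ℝ) (ht : 0 ≤ t) : t ≤ Real.sqrt (t*(t+1)) := by
  calc t = Real.sqrt (t^2) := (Real.sqrt_sq ht).symm
    _ ≤ _ := Real.sqrt_le_sqrt (by nlinarith)

lemma g_ub (t : ℝ) (ht : 0 ≤ t) : 2*Real.sqrt (t*(t+1)) - 2*t < 1 := by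
  have h : Real.sqrt (t*(t+1)) < t + 1/2 := by
    rw [show t + 1/2 = Real.sqrt ((t+1/2)^2) by rw [Real.sqrt_sq (by linarith)]]
    apply Real.sqrt_lt_sqrt (by nlinarith)
    nlinarith
  linarith

lemma hasDerivAt_g (nr Na : ℝ) (hnr : 0 < nr) (hNa : 0 < Na) :
    HasDerivAt (fun x => 2*Real.sqrt (nr*x*(nr*x+1)) - 2*(nr*x))
      (nr*(2*(nr*Na)+1)/Real.sqrt (nr*Na*(nr*Na+1)) - 2*nr) Na := by
  have hu0 : 0 < nr*Na*(nr*Na+1) := by positivity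
  have hs0 : 0 < Real.sqrt (nr*Na*(nr*Na+1)) := Real.sqrt_pos.2 hu0
  have hu : HasDerivAt (fun x => nr*x*(nr*x+1)) (nr*(2*(nr*Na)+1)) Na := by
    have h1 : HasDerivAt (fun x : ℝ => nr*x*(nr*x+1)) (nr*1*(nr*Na+1) + nr*Na*(nr*1)) Na := by
      exact ((hasDerivAt_id Na).const_mul nr).mul (((hasDerivAt_id Na).const_mul nr).add_const 1)
    convert h1 using 1; ring
  have hsq : HasDerivAt (fun x => Real.sqrt (nr*x*(nr*x+1)))
      (nr*(2*(nr*Na)+1) / (2 * Real.sqrt (nr*Na*(nr*Na+1)))) Na := hu.sqrt hu0.ne'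
  have h2 : HasDerivAt (fun x : ℝ => nr*x) nr Na := by
    simpa using (hasDerivAt_id Na).const_mul nr
  have := (hsq.const_mul 2).sub (h2.const_mul 2)
  refine this.congr_deriv ?_
  field_simp

lemma hasDerivAt_F (N nr η ηd : ℝ) (g : ℝ → ℝ) (gd Na : ℝ)
    (hg : HasDerivAt g gd Na) (h1 : 0 < 1 - g Na * η) (h2 : 0 < 1 - g Na * η * ηd) :
    HasDerivAt (fun x => 1/(2*nr) * (g x * η/(1 - g x*η)*(1-ηd)
        - (Real.log (1 - g x*η*ηd) - Real.log (1 - g x*η))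
        + 4*N*nr*η*(1-Real.sqrt ηd)^2/(1 - g x*η)))
      (1/(2*nr) * ((η*(1-ηd)/(1-g Na*η)^2 + η*ηd/(1-g Na*η*ηd) - η/(1-g Na*η)
        + 4*N*nr*η^2*(1-Real.sqrt ηd)^2/(1-g Na*η)^2) * gd)) Na := by
  have hgη : HasDerivAt (fun x => 1 - g x * η) (-(gd*η)) Na := by
    simpa using (hg.mul_const η).const_sub 1
  have hgηd : HasDerivAt (fun x => 1 - g x * η * ηd) (-(gd*η*ηd)) Na := by
    simpa using ((hg.mul_const η).mul_const ηd).const_sub 1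
  have hA : HasDerivAt (fun x => g x * η/(1 - g x*η)*(1-ηd))
      (((gd*η)*(1 - g Na*η) - (g Na*η)*(-(gd*η)))/(1 - g Na*η)^2 * (1-ηd)) Na :=
    ((hg.mul_const η).div hgη h1.ne').mul_const _
  have hB : HasDerivAt (fun x => Real.log (1 - g x*η*ηd)) (-(gd*η*ηd)/(1 - g Na*η*ηd)) Na :=
    hgηd.log h2.ne'
  have hC : HasDerivAt (fun x => Real.log (1 - g x*η)) (-(gd*η)/(1 - g Na*η)) Na :=
    hgη.log h1.ne'
  have hE : HasDerivAt (fun x => 4*N*nr*η*(1-Real.sqrt ηd)^2/(1 - g x*η))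
      ((0*(1 - g Na*η) - (4*N*nr*η*(1-Real.sqrt ηd)^2)*(-(gd*η)))/(1 - g Na*η)^2) Na :=
    (hasDerivAt_const Na _).div hgη h1.ne'
  have := (((hA.sub (hB.sub hC)).add hE)).const_mul (1/(2*nr))
  refine this.congr_deriv ?_
  field_simp
  ring

lemma gd_sqrt_eq (nr x : ℝ) (hnr : 0 < nr) (hx : 0 < x) :
    (nr*(2*(nr*x)+1)/Real.sqrt (nr*x*(nr*x+1)) - 2*nr) * Real.sqrt x
      = Real.sqrt nr*(2*(nr*x)+1)/Real.sqrt (nr*x+1) - 2*nr*Real.sqrt x := by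
  have h1 : Real.sqrt (nr*x*(nr*x+1)) = Real.sqrt nr * Real.sqrt x * Real.sqrt (nr*x+1) := by
    rw [Real.sqrt_mul (by positivity), Real.sqrt_mul hnr.le]
  have hsx : 0 < Real.sqrt x := Real.sqrt_pos.2 hx
  have hsn : 0 < Real.sqrt nr := Real.sqrt_pos.2 hnr
  have hst : 0 < Real.sqrt (nr*x+1) := Real.sqrt_pos.2 (by positivity)
  have hn2' : Real.sqrt nr ^ 2 = nr := Real.sq_sqrt hnr.le
  rw [h1]
  field_simp
  ring_nf
  linear_combination (-(1+2*nr*x)) * hn2'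

/-- Infinite marginal sensitivity at N_a → 0⁺: the derivative of the per-pulse
quantum KL divergence D with respect to N_a diverges, and more precisely
(∂D/∂N_a)·√N_a → 2N√n·η²(1−√η_d)². -/
theorem deriv_D_Na_blowup (n : ℕ) (hn : 1 ≤ n) (N η ηd : ℝ)
    (hN : 0 < N) (hη : 0 < η) (hη1 : η < 1) (hηd : 0 < ηd) (hηd1 : ηd < 1)
    (c D : ℝ → ℝ)
    (hc : ∀ Na : ℝ, c Na = 2 * Real.sqrt ((n : ℝ) * Na)
        / (Real.sqrt ((n : ℝ) * Na + 1) + Real.sqrt ((n : ℝ) * Na)))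
    (hD : ∀ Na : ℝ, D Na = 1 / (2 * (n : ℝ)) *
        (c Na * η / (1 - c Na * η) * (1 - ηd)
          - Real.log ((1 - c Na * η * ηd) / (1 - c Na * η))
          + 4 * N * (n : ℝ) * η * (1 - Real.sqrt ηd) ^ 2 / (1 - c Na * η))) :
    Tendsto (deriv D) (nhdsWithin 0 (Set.Ioi 0)) atTop ∧
      Tendsto (fun Na => deriv D Na * Real.sqrt Na) (nhdsWithin 0 (Set.Ioi 0))
        (nhds (2 * N * Real.sqrt (n : ℝ) * η ^ 2 * (1 - Real.sqrt ηd) ^ 2)) := by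
  set nr : ℝ := (n : ℝ) with hnrdef
  have hnr0 : (0:ℝ) < nr := by
    have : (1:ℝ) ≤ nr := by rw [hnrdef]; exact_mod_cast hn
    linarith
  set gf : ℝ → ℝ := fun x => 2*Real.sqrt (nr*x*(nr*x+1)) - 2*(nr*x) with hgfdef
  set gd : ℝ → ℝ := fun x => nr*(2*(nr*x)+1)/Real.sqrt (nr*x*(nr*x+1)) - 2*nr with hgddef
  set Φ : ℝ → ℝ := fun x => η*(1-ηd)/(1-gf x*η)^2 + η*ηd/(1-gf x*η*ηd) - η/(1-gf x*η)
        + 4*N*nr*η^2*(1-Real.sqrt ηd)^2/(1-gf x*η)^2 with hΦdef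
  set Ψ : ℝ → ℝ := fun x => Real.sqrt nr*(2*(nr*x)+1)/Real.sqrt (nr*x+1) - 2*nr*Real.sqrt x
    with hΨdef
  set Dt : ℝ → ℝ := fun x => 1/(2*nr) * (gf x * η/(1 - gf x*η)*(1-ηd)
        - (Real.log (1 - gf x*η*ηd) - Real.log (1 - gf x*η))
        + 4*N*nr*η*(1-Real.sqrt ηd)^2/(1 - gf x*η)) with hDtdef
  -- bounds on gf
  have hgf01 : ∀ x : ℝ, 0 ≤ x → 0 ≤ gf x ∧ gf x < 1 := by
    intro x hx
    have ht : 0 ≤ nr*x := by positivity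
    constructor
    · have := g_lb (nr*x) ht
      simp only [hgfdef]
      linarith
    · exact g_ub (nr*x) ht
  have hden : ∀ x : ℝ, 0 ≤ x → 0 < 1 - gf x * η ∧ 0 < 1 - gf x * η * ηd := by
    intro x hx
    obtain ⟨h0, h1⟩ := hgf01 x hx
    have ha : 0 < 1 - gf x * η := by nlinarith
    refine ⟨ha, ?_⟩
    nlinarith [mul_nonneg h0 hη.le]
  -- c = gf on positives
  have hcg : ∀ x : ℝ, 0 < x → c x = gf x := by
    intro x hx
    rw [hc x]
    exact key_c_eq (nr*x) (by positivity)
  -- D = Dt on positives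
  have hDE : ∀ x : ℝ, 0 < x → D x = Dt x := by
    intro x hx
    obtain ⟨h1, h2⟩ := hden x hx.le
    rw [hD x, hcg x hx, hDtdef]
    simp only
    rw [Real.log_div h2.ne' h1.ne']
  -- derivative of Dt
  have hDt : ∀ x : ℝ, 0 < x → HasDerivAt Dt (1/(2*nr) * (Φ x * gd x)) x := by
    intro x hx
    obtain ⟨h1, h2⟩ := hden x hx.le
    exact hasDerivAt_F N nr η ηd gf (gd x) x (hasDerivAt_g nr x hnr0 hx) h1 h2
  -- deriv D on positives
  have hdD : ∀ x : ℝ, 0 < x → deriv D x = 1/(2*nr) * (Φ x * gd x) := by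
    intro x hx
    have hev : D =ᶠ[nhds x] Dt := by
      filter_upwards [isOpen_Ioi.mem_nhds hx] with y hy using hDE y hy
    rw [hev.deriv_eq, (hDt x hx).deriv]
  -- continuity facts at 0
  have hgf0 : gf 0 = 0 := by simp [hgfdef]
  have hgfc : Continuous gf := by
    rw [hgfdef]
    have hu : Continuous fun x : ℝ => nr*x*(nr*x+1) := by fun_prop
    exact (continuous_const.mul (Real.continuous_sqrt.comp hu)).sub (by fun_prop)
  have hd10 : (0:ℝ) < 1 - gf 0 * η := (hden 0 le_rfl).1
  have hd20 : (0:ℝ) < 1 - gf 0 * η * ηd := (hden 0 le_rfl).2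
  have hc1 : ContinuousAt (fun x => 1 - gf x * η) 0 :=
    (continuous_const.sub (hgfc.mul continuous_const)).continuousAt
  have hc2 : ContinuousAt (fun x => 1 - gf x * η * ηd) 0 :=
    (continuous_const.sub ((hgfc.mul continuous_const).mul continuous_const)).continuousAt
  have hΦc : ContinuousAt Φ 0 := by
    rw [hΦdef]
    have e1 : ContinuousAt (fun x => η*(1-ηd)/(1-gf x*η)^2) 0 :=
      continuousAt_const.div (hc1.pow 2) (pow_ne_zero 2 hd10.ne')
    have e2 : ContinuousAt (fun x => η*ηd/(1-gf x*η*ηd)) 0 :=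
      continuousAt_const.div hc2 hd20.ne'
    have e3 : ContinuousAt (fun x => η/(1-gf x*η)) 0 :=
      continuousAt_const.div hc1 hd10.ne'
    have e4 : ContinuousAt (fun x => 4*N*nr*η^2*(1-Real.sqrt ηd)^2/(1-gf x*η)^2) 0 :=
      continuousAt_const.div (hc1.pow 2) (pow_ne_zero 2 hd10.ne')
    exact ((e1.add e2).sub e3).add e4
  have hΨc : ContinuousAt Ψ 0 := by
    rw [hΨdef]
    have h1 : ContinuousAt (fun x => Real.sqrt nr*(2*(nr*x)+1)) 0 := by fun_prop
    have h2 : ContinuousAt (fun x => Real.sqrt (nr*x+1)) 0 :=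
      (Real.continuous_sqrt.comp (by fun_prop)).continuousAt
    have hne : Real.sqrt (nr*(0:ℝ)+1) ≠ 0 := by
      rw [mul_zero, zero_add, Real.sqrt_one]; norm_num
    exact (h1.div h2 hne).sub
      ((continuous_const.mul Real.continuous_sqrt).continuousAt)
  have hΦ0 : Φ 0 = 4*N*nr*η^2*(1-Real.sqrt ηd)^2 := by
    rw [hΦdef]
    simp only [hgf0]
    norm_num
    ring
  have hΨ0 : Ψ 0 = Real.sqrt nr := by
    rw [hΨdef]
    simp
  -- part 2
  have part2 : Tendsto (fun Na => deriv D Na * Real.sqrt Na) (nhdsWithin 0 (Set.Ioi 0))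
      (nhds (2 * N * Real.sqrt nr * η ^ 2 * (1 - Real.sqrt ηd) ^ 2)) := by
    have hTc : ContinuousAt (fun x => 1/(2*nr) * (Φ x * Ψ x)) 0 :=
      continuousAt_const.mul (hΦc.mul hΨc)
    have h : Tendsto (fun x => 1/(2*nr) * (Φ x * Ψ x)) (nhdsWithin 0 (Set.Ioi 0))
        (nhds (1/(2*nr) * (Φ 0 * Ψ 0))) := hTc.tendsto.mono_left nhdsWithin_le_nhds
    have hval : 1/(2*nr) * (Φ 0 * Ψ 0)
        = 2 * N * Real.sqrt nr * η ^ 2 * (1 - Real.sqrt ηd) ^ 2 := by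
      rw [hΦ0, hΨ0]
      field_simp
      ring
    rw [hval] at h
    refine h.congr' ?_
    filter_upwards [self_mem_nhdsWithin] with x hx
    rw [hdD x hx]
    have hkey := gd_sqrt_eq nr x hnr0 hx
    simp only [hgddef, hΨdef]
    rw [← hkey]
    ring
  refine ⟨?_, part2⟩
  -- part 1
  have hinv : Tendsto (fun x => (Real.sqrt x)⁻¹) (nhdsWithin 0 (Set.Ioi 0)) atTop := by
    apply tendsto_inv_nhdsGT_zero.comp
    rw [tendsto_nhdsWithin_iff]
    constructor
    · have h0 : Tendsto Real.sqrt (nhds 0) (nhds (Real.sqrt 0)) :=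
        Real.continuous_sqrt.continuousAt
      simpa using h0.mono_left nhdsWithin_le_nhds
    · filter_upwards [self_mem_nhdsWithin] with x hx
      exact Real.sqrt_pos.2 hx
  have hLpos : 0 < 2 * N * Real.sqrt nr * η ^ 2 * (1 - Real.sqrt ηd) ^ 2 := by
    have h1 : Real.sqrt ηd < 1 := by
      rw [show (1:ℝ) = Real.sqrt 1 by simp]
      exact Real.sqrt_lt_sqrt hηd.le (by simpa using hηd1)
    have h2 : 0 < Real.sqrt nr := Real.sqrt_pos.2 hnr0
    have h3 : 0 < 1 - Real.sqrt ηd := by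
      have : Real.sqrt 1 = 1 := Real.sqrt_one
      linarith [h1]
    positivity
  have h1' := part2.pos_mul_atTop hLpos hinv
  refine h1'.congr' ?_
  filter_upwards [self_mem_nhdsWithin] with x hx
  have hne : Real.sqrt x ≠ 0 := (Real.sqrt_pos.2 hx).ne'
  rw [mul_assoc, mul_inv_cancel₀ hne, mul_one]
end
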